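/- arXiv:1602.03554 — 3 statements merged into one kernel-verified Lean document; each statement's English description precedes it below -/
import Mathlib

section
/- Let S be a monic subset of the free associative conformal algebra C(B, N). Then every f ∈ C(B, N) can be written as f = Σ_j α_j [u_j]_{D^{l_j} s_j} + Σ_k α_k [u_k], where each [u_j]_{D^{l_j} s_j} is a normal S-word with leading word at most \bar{f}, each [u_k] is an S-irreducible normal word with u_k ≤ \bar{f}, the α's are scalars, and s_j ∈ S. -/
/-!  Basic definitions for (associative) conformal algebras, the free
associative conformal algebra `C(B,N)`, normal words, the weight ordering,
normal `S`-words, compositions and Gröbner–Shirshov bases, following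
Ni–Chen, "A new Composition-Diamond lemma for associative conformal algebras". -/

universe u v w

open scoped BigOperators

/-- A conformal algebra over a field `K`. -/
structure ConformalAlgebra (K : Type u) [Field K] (C : Type w)
    [AddCommGroup C] [Module K C] where
  mul : ℕ → C →ₗ[K] C →ₗ[K] C
  D : C →ₗ[K] C
  locality : ∀ a b : C, ∃ N : ℕ, ∀ n : ℕ, N ≤ n → mul n a b = 0
  leibniz : ∀ (n : ℕ) (a b : C), D (mul n a b) = mul n (D a) b + mul n a (D b)
  D_mul : ∀ (n : ℕ) (a b : C), 0 < n → mul n (D a) b = -((n : K) • mul (n - 1) a b)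
  D_mul_zero : ∀ a b : C, mul 0 (D a) b = 0

/-- An associative conformal algebra. -/
structure AssocConformalAlgebra (K : Type u) [Field K] (C : Type w)
    [AddCommGroup C] [Module K C] extends ConformalAlgebra K C where
  assoc : ∀ (n m : ℕ) (a b c : C),
    mul m (mul n a b) c =
      ∑ t ∈ Finset.range (n + 1),
        ((-1 : K) ^ t * (n.choose t : K)) • mul (n - t) a (mul (m + t) b c)

variable {K : Type u} [Field K] {C : Type w} [AddCommGroup C] [Module K C]

/-- The conjugate sum `{y_(n) x} = Σ_{m≥0} (-1)^{n+m} (1/m!) D^m (f (n+m) y x)`;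
a finite sum by locality. -/
noncomputable def conjOp (D : C →ₗ[K] C) (f : ℕ → C → C → C) (n : ℕ) (y x : C) : C :=
  ∑ᶠ m : ℕ, ((-1 : K) ^ (n + m) * ((m.factorial : K))⁻¹) • (D ^ m) (f (n + m) y x)

/-- The conformal commutator `x_[n] y = x_(n) y − {y_(n) x}`. -/
noncomputable def cBracket (A : AssocConformalAlgebra K C) (n : ℕ) (x y : C) : C :=
  A.mul n x y - conjOp A.D (fun m u v => A.mul m u v) n y x

/-- An associative normal word `b₁_(n₁) ⋯ b_k_(n_k) D^i b_{k+1}`. -/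
structure NormalWord (B : Type v) (N : ℕ) where
  body : List (B × Fin N)
  last : B
  exp : ℕ

namespace NormalWord

variable {B : Type v} {N : ℕ}

/-- `u D^i` : raise the final `D`-exponent by `i`. -/
def shiftD (u : NormalWord B N) (i : ℕ) : NormalWord B N := ⟨u.body, u.last, u.exp + i⟩

/-- Concatenation `a_(n) u` of a `D`-free word `a` with `u`. -/
def concat (u : NormalWord B N) (n : Fin N) (v : NormalWord B N) : NormalWord B N :=
  ⟨u.body ++ (u.last, n) :: v.body, v.last, v.exp⟩

/-- `u^{\D} ♮ v` : drop the final `D`-exponent of `u` and concatenate with `v`,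
all junction indices being `N − 1`. -/
def natMul (u v : NormalWord B N) (hN : 0 < N) : NormalWord B N :=
  ⟨u.body ++ (u.last, ⟨N - 1, Nat.sub_lt hN one_pos⟩) ::
      v.body.map (fun p => (p.1, (⟨N - 1, Nat.sub_lt hN one_pos⟩ : Fin N))),
    v.last, v.exp⟩

end NormalWord

/-- The strict weight ordering on associative normal words: compare lengths,
then the body lexicographically, then the last letter, then the `D`-exponent. -/
def wtLT {B : Type v} {N : ℕ} (r : B → B → Prop) (u v : NormalWord B N) : Prop :=
  u.body.length < v.body.length ∨
    (u.body.length = v.body.length ∧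
      (List.Lex (Prod.Lex r (· < ·)) u.body v.body ∨
        (u.body = v.body ∧ (r u.last v.last ∨ (u.last = v.last ∧ u.exp < v.exp)))))

def wtLE {B : Type v} {N : ℕ} (r : B → B → Prop) (u v : NormalWord B N) : Prop :=
  wtLT r u v ∨ u = v

/-- Words on the alphabet `D^ω(B) = {D^i b}`. -/
inductive CWord (B : Type v) : Type v
  | gen : B → ℕ → CWord B
  | mul : ℕ → CWord B → CWord B → CWord B

/-- Length of a word. -/
def CWord.length {B : Type v} : CWord B → ℕ
  | .gen _ _ => 1
  | .mul _ u v => u.length + v.length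

/-- The free associative conformal algebra `C(B,N)` generated by `B` with
uniformly bounded locality `N`, axiomatized by its universal property. -/
structure FreeAssocConformal (K : Type u) [Field K] (B : Type v) (N : ℕ)
    (C : Type w) [AddCommGroup C] [Module K C] where
  alg : AssocConformalAlgebra K C
  ι : B → C
  loc : ∀ (b b' : B) (n : ℕ), N ≤ n → alg.mul n (ι b) (ι b') = 0
  universal : ∀ (C' : Type w) [AddCommGroup C'] [Module K C']
      (A' : AssocConformalAlgebra K C') (ε : B → C'),
      (∀ (b b' : B) (n : ℕ), N ≤ n → A'.mul n (ε b) (ε b') = 0) →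
      ∃! φ : C →ₗ[K] C', (∀ b, φ (ι b) = ε b) ∧
        (∀ (n : ℕ) (x y : C), φ (alg.mul n x y) = A'.mul n (φ x) (φ y)) ∧
        (∀ x : C, φ (alg.D x) = A'.D (φ x))

variable {B : Type v} {N : ℕ}

/-- Evaluate a `D`-free prefix (a list of letters with indices) applied to `x`,
right-normed. -/
def evalAux (F : FreeAssocConformal K B N C) : List (B × Fin N) → C → C
  | [], x => x
  | p :: rest, x => F.alg.mul (p.2 : ℕ) (F.ι p.1) (evalAux F rest x)

/-- The element of `C(B,N)` given by a normal word (right-normed bracketing). -/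
def evalWord (F : FreeAssocConformal K B N C) (u : NormalWord B N) : C :=
  evalAux F u.body ((F.alg.D ^ u.exp) (F.ι u.last))

/-- Evaluate an arbitrary word on `D^ω(B)` in `C(B,N)`. -/
def evalCWord (F : FreeAssocConformal K B N C) : CWord B → C
  | .gen b i => (F.alg.D ^ i) (F.ι b)
  | .mul n u v => F.alg.mul n (evalCWord F u) (evalCWord F v)

/-- `w` is the leading word `\bar f` of `f` with respect to the normal-word
basis `bas` and the weight ordering induced by `r`. -/
def IsLead (bas : Module.Basis (NormalWord B N) K C) (r : B → B → Prop)
    (f : C) (w : NormalWord B N) : Prop :=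
  bas.repr f w ≠ 0 ∧ ∀ w', bas.repr f w' ≠ 0 → w' = w ∨ wtLT r w' w

/-- A set of polynomials is monic if each has leading coefficient `1`. -/
def MonicSet (bas : Module.Basis (NormalWord B N) K C) (r : B → B → Prop) (S : Set C) : Prop :=
  ∀ s ∈ S, ∃ w, IsLead bas r s w ∧ bas.repr s w = 1

/-- Normal `S`-words together with their (formal) leading words:
either `[a_(n) s_(m) c]` with `a, \bar s` `D`-free, or `[a_(n) D^i s]`
with `a` `D`-free; the prefix `a_(n)` is encoded by the list `p`
(empty list = empty `a`). -/
inductive IsNSWord (F : FreeAssocConformal K B N C)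
    (bas : Module.Basis (NormalWord B N) K C) (r : B → B → Prop) (S : Set C) :
    C → NormalWord B N → Prop
  | first (p : List (B × Fin N)) (s : C) (hs : s ∈ S) (sw : NormalWord B N)
      (hlead : IsLead bas r s sw) (hfree : sw.exp = 0) (m : Fin N) (c : NormalWord B N) :
      IsNSWord F bas r S (evalAux F p (F.alg.mul (m : ℕ) s (evalWord F c)))
        ⟨p ++ sw.body ++ (sw.last, m) :: c.body, c.last, c.exp⟩
  | second (p : List (B × Fin N)) (s : C) (hs : s ∈ S) (sw : NormalWord B N)
      (hlead : IsLead bas r s sw) (i : ℕ) :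
      IsNSWord F bas r S (evalAux F p ((F.alg.D ^ i) s)) ⟨p ++ sw.body, sw.last, sw.exp + i⟩

/-- `h` can be written as a linear combination of normal `S`-words whose
(formal leading) words all satisfy `P`. -/
def SRep (F : FreeAssocConformal K B N C) (bas : Module.Basis (NormalWord B N) K C)
    (r : B → B → Prop) (S : Set C) (h : C) (P : NormalWord B N → Prop) : Prop :=
  ∃ (n : ℕ) (α : Fin n → K) (g : Fin n → C) (wd : Fin n → NormalWord B N),
    h = ∑ i, α i • g i ∧ ∀ i, IsNSWord F bas r S (g i) (wd i) ∧ P (wd i)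

/-- `h` is trivial modulo `S`: a linear combination of normal `S`-words with
leading words `≤ \bar h`. -/
def TrivialMod (F : FreeAssocConformal K B N C) (bas : Module.Basis (NormalWord B N) K C)
    (r : B → B → Prop) (S : Set C) (h : C) : Prop :=
  SRep F bas r S h (fun wd => ∀ hw, IsLead bas r h hw → wtLE r wd hw)

/-- `f` is not `D`-free: some monomial has positive `D`-exponent. -/
def NotDFree (bas : Module.Basis (NormalWord B N) K C) (f : C) : Prop :=
  ∃ w, bas.repr f w ≠ 0 ∧ w.exp ≠ 0

/-- All left multiplication compositions `b_(n) s`, `n ≥ N`, are trivial. -/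
def LeftMultClosed (F : FreeAssocConformal K B N C) (bas : Module.Basis (NormalWord B N) K C)
    (r : B → B → Prop) (S : Set C) : Prop :=
  ∀ s ∈ S, ∀ (b : B) (n : ℕ), N ≤ n → TrivialMod F bas r S (F.alg.mul n (F.ι b) s)

/-- All right multiplication compositions `s_(n) b` (for `\bar s` not `D`-free
and `n < N`, or `s` not `D`-free and `n ≥ N`) are trivial. -/
def RightMultClosed (F : FreeAssocConformal K B N C) (bas : Module.Basis (NormalWord B N) K C)
    (r : B → B → Prop) (S : Set C) : Prop :=
  ∀ s ∈ S, ∀ (b : B) (n : ℕ),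
    ((∃ sw, IsLead bas r s sw ∧ sw.exp ≠ 0) ∧ n < N) ∨ (NotDFree bas s ∧ N ≤ n) →
    TrivialMod F bas r S (F.alg.mul n s (F.ι b))

/-- `S` is a Gröbner–Shirshov basis in `C(B,N)`: `S` is monic and all
compositions (inclusion, right inclusion, intersection, right intersection,
left and right multiplication) are trivial modulo `S`. -/
def IsGSBasis (F : FreeAssocConformal K B N C) (bas : Module.Basis (NormalWord B N) K C)
    (r : B → B → Prop) (S : Set C) : Prop :=
  MonicSet bas r S ∧
  -- inclusion: \bar f = a_(n) \bar g_(m) c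
  (∀ f ∈ S, ∀ g ∈ S, ∀ fw gw : NormalWord B N,
    IsLead bas r f fw → IsLead bas r g gw → gw.exp = 0 →
    ∀ (p : List (B × Fin N)) (m : Fin N) (c : NormalWord B N),
      fw = ⟨p ++ sw₁ p gw m c, c.last, c.exp⟩ →
      TrivialMod F bas r S (f - evalAux F p (F.alg.mul (m : ℕ) g (evalWord F c)))) ∧
  -- right inclusion: \bar f = a_(n) \bar g D^i
  (∀ f ∈ S, ∀ g ∈ S, ∀ fw gw : NormalWord B N,
    IsLead bas r f fw → IsLead bas r g gw →
    ∀ (p : List (B × Fin N)) (i : ℕ),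
      fw = ⟨p ++ gw.body, gw.last, gw.exp + i⟩ →
      TrivialMod F bas r S (f - evalAux F p ((F.alg.D ^ i) g))) ∧
  -- intersection: w = \bar f_(m) c = a_(n) \bar g, |\bar f| + |\bar g| > |w|
  (∀ f ∈ S, ∀ g ∈ S, ∀ fw gw : NormalWord B N,
    IsLead bas r f fw → IsLead bas r g gw → fw.exp = 0 →
    ∀ (p : List (B × Fin N)) (m : Fin N) (c : NormalWord B N),
      fw.body ++ (fw.last, m) :: c.body = p ++ gw.body →
      c.last = gw.last → c.exp = gw.exp →
      p.length < fw.body.length + 1 →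
      TrivialMod F bas r S (F.alg.mul (m : ℕ) f (evalWord F c) - evalAux F p g)) ∧
  -- right intersection: w = \bar f D^i = a_(n) \bar g, i > 0
  (∀ f ∈ S, ∀ g ∈ S, ∀ fw gw : NormalWord B N,
    IsLead bas r f fw → IsLead bas r g gw →
    ∀ (p : List (B × Fin N)) (i : ℕ), 0 < i →
      fw.body = p ++ gw.body → fw.last = gw.last → fw.exp + i = gw.exp →
      TrivialMod F bas r S ((F.alg.D ^ i) f - evalAux F p g)) ∧
  LeftMultClosed F bas r S ∧ RightMultClosed F bas r S
where sw₁ (p : List (B × Fin N)) (gw : NormalWord B N) (m : Fin N) (c : NormalWord B N) :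
    List (B × Fin N) := gw.body ++ (gw.last, m) :: c.body

/-- The set of `S`-irreducible normal words. -/
def Irr (F : FreeAssocConformal K B N C) (bas : Module.Basis (NormalWord B N) K C)
    (r : B → B → Prop) (S : Set C) : Set (NormalWord B N) :=
  {w | ¬ ∃ g : C, IsNSWord F bas r S g w}

/-- Membership in the (conformal) ideal generated by `S`. -/
inductive InIdeal (F : FreeAssocConformal K B N C) (S : Set C) : C → Prop
  | mem {s : C} : s ∈ S → InIdeal F S s
  | zero : InIdeal F S 0
  | add {x y : C} : InIdeal F S x → InIdeal F S y → InIdeal F S (x + y)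
  | smul (a : K) {x : C} : InIdeal F S x → InIdeal F S (a • x)
  | deriv {x : C} : InIdeal F S x → InIdeal F S (F.alg.D x)
  | mul_left (n : ℕ) (y : C) {x : C} : InIdeal F S x → InIdeal F S (F.alg.mul n y x)
  | mul_right (n : ℕ) (y : C) {x : C} : InIdeal F S x → InIdeal F S (F.alg.mul n x y)

/-- The ideal generated by `S`, as a submodule. -/
def idealOf (F : FreeAssocConformal K B N C) (S : Set C) : Submodule K C where
  carrier := {x | InIdeal F S x}
  add_mem' := fun hx hy => InIdeal.add hx hy
  zero_mem' := InIdeal.zero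
  smul_mem' := fun a _ hx => InIdeal.smul a hx

/-- `S`-words: words containing exactly one occurrence of some `D^i s`, `s ∈ S`. -/
inductive IsSWord (F : FreeAssocConformal K B N C) (S : Set C) : C → Prop
  | base {s : C} (hs : s ∈ S) (i : ℕ) : IsSWord F S ((F.alg.D ^ i) s)
  | mul_right {u : C} (hu : IsSWord F S u) (v : CWord B) (m : ℕ) :
      IsSWord F S (F.alg.mul m u (evalCWord F v))
  | mul_left {u : C} (hu : IsSWord F S u) (v : CWord B) (m : ℕ) :
      IsSWord F S (F.alg.mul m (evalCWord F v) u)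

/-- A reduced set: every monomial of each `s ∈ S` is `(S∖{s})`-irreducible. -/
def IsReducedSet (F : FreeAssocConformal K B N C) (bas : Module.Basis (NormalWord B N) K C)
    (r : B → B → Prop) (S : Set C) : Prop :=
  ∀ s ∈ S, ∀ w, bas.repr s w ≠ 0 → w ∈ Irr F bas r (S \ {s})

/-!
Since `S` is monic, a normal `S`-word with formal leading word `w` is `[w]` plus normal words
strictly below `w`. For `[a_(n) D^i s]` this holds because `D` and left multiplication by a
generator with index `< N` move leading words monotonically. For `[a_(n) s_(m) c]` one needs the
leading part of a product `[v]_(m) [c]` of normal words: it is `[v_(m) c]` if `v` is `D`-free,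
and every other term produced by associativity starts with a letter of smaller index while its
body has length at most `|v| + |c| + 1`. This length bound holds for all indices, also beyond the
locality bound: `b_(q) (c₁_(k) c')` with `q ≥ N` is rewritten by associativity through the
products `(b_(i) c₁)_(j) c'`, which vanish for `i ≥ N`.

Well-founded induction on the weight order then puts every `[u]` with `u ≤ \bar f` into the span
of the normal `S`-words and `S`-irreducible words below `\bar f`: an `S`-reducible `u` is the
word of a normal `S`-word `g`, and `[u] = g - (terms below u)`.
-/

namespace NormalWord

def prepend (p : List (B × Fin N)) (u : NormalWord B N) : NormalWord B N :=
  ⟨p ++ u.body, u.last, u.exp⟩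

end NormalWord

instance List.Lex.isStrictTotalOrder {α : Type*} (s : α → α → Prop) [IsStrictTotalOrder α s] :
    IsStrictTotalOrder (List α) (List.Lex s) :=
  { isStrictWeakOrder_of_isOrderConnected with }

lemma List.Lex.append_of_length_eq {α : Type*} {s : α → α → Prop} {l₁ l₂ : List α}
    (h : List.Lex s l₁ l₂) (hl : l₁.length = l₂.length) (m₁ m₂ : List α) :
    List.Lex s (l₁ ++ m₁) (l₂ ++ m₂) := by
  induction h with
  | nil => simp at hl
  | cons _ ih => exact .cons (ih (by simpa using hl))
  | rel h => exact .rel h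

section WeightOrder

open NormalWord

variable {r : B → B → Prop}

lemma wtLT_iff_prodLex {u v : NormalWord B N} :
    wtLT r u v ↔
      Prod.Lex (· < ·) (Prod.Lex (List.Lex (Prod.Lex r (· < ·))) (Prod.Lex r (· < ·)))
        (u.body.length, u.body, u.last, u.exp) (v.body.length, v.body, v.last, v.exp) := by
  simp only [wtLT, Prod.lex_def]

lemma prodLex_shortlex_of_wtLT {u v : NormalWord B N} (h : wtLT r u v) :
    Prod.Lex (List.Shortlex (Prod.Lex r (· < ·))) (Prod.Lex r (· < ·))
      (u.body, u.last, u.exp) (v.body, v.last, v.exp) := by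
  rcases h with h | ⟨hl, h | ⟨hb, h⟩⟩
  · exact Prod.Lex.left _ _ (List.Shortlex.of_length_lt h)
  · exact Prod.Lex.left _ _ (List.Shortlex.of_lex hl h)
  · exact Prod.lex_def.2 (Or.inr ⟨hb, Prod.lex_def.2 h⟩)

lemma wtLE.length_le {u v : NormalWord B N} (h : wtLE r u v) :
    u.body.length ≤ v.body.length := by
  rcases h with (h | ⟨h, -⟩) | rfl <;> omega

lemma wtLT_prepend {u v : NormalWord B N} (p : List (B × Fin N)) (h : wtLT r u v) :
    wtLT r (u.prepend p) (v.prepend p) := by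
  rcases h with h | ⟨hl, h | ⟨hb, h⟩⟩
  · exact Or.inl (by simp [prepend, h])
  · exact Or.inr ⟨by simp [prepend, hl], Or.inl (List.Lex.append_left _ h p)⟩
  · exact Or.inr ⟨by simp [prepend, hl], Or.inr ⟨by simp [prepend, hb], h⟩⟩

lemma wtLT_prepend_singleton {a a' : B × Fin N} {u v : NormalWord B N}
    (ha : Prod.Lex r (· < ·) a a') (hl : u.body.length ≤ v.body.length) :
    wtLT r (u.prepend [a]) (v.prepend [a']) := by
  rcases hl.lt_or_eq with hl | hl
  · exact Or.inl (by simp [prepend, hl])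
  · exact Or.inr ⟨by simp [prepend, hl], Or.inl (List.Lex.rel ha)⟩

lemma wtLT_shiftD {u v : NormalWord B N} (i : ℕ) (h : wtLT r u v) :
    wtLT r (u.shiftD i) (v.shiftD i) := by
  rcases h with h | ⟨hl, h | ⟨hb, h | ⟨hlast, h⟩⟩⟩
  · exact Or.inl h
  · exact Or.inr ⟨hl, Or.inl h⟩
  · exact Or.inr ⟨hl, Or.inr ⟨hb, Or.inl h⟩⟩
  · exact Or.inr ⟨hl, Or.inr ⟨hb, Or.inr ⟨hlast, Nat.add_lt_add_right h i⟩⟩⟩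

/-- `concat` forgets the exponent of its left factor, so `v` must not lie below `w` only through
its exponent. -/
lemma wtLT_concat {v w : NormalWord B N} (hw : w.exp = 0) (m : Fin N) (c : NormalWord B N)
    (h : wtLT r v w) : wtLT r (v.concat m c) (w.concat m c) := by
  rcases h with h | ⟨hl, h | ⟨hb, h | ⟨-, h⟩⟩⟩
  · refine Or.inl ?_
    simp only [concat, List.length_append, List.length_cons]
    omega
  · refine Or.inr ⟨by simp [concat, hl], Or.inl ?_⟩
    exact h.append_of_length_eq hl _ _
  · refine Or.inr ⟨by simp [concat, hb], Or.inl ?_⟩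
    simp only [concat, hb]
    exact List.Lex.append_left _ (List.Lex.rel (Prod.Lex.left _ _ h)) _
  · omega

variable [IsWellOrder B r]

lemma wtLT_trans {u v w : NormalWord B N} (h₁ : wtLT r u v) (h₂ : wtLT r v w) : wtLT r u w :=
  wtLT_iff_prodLex.2 (_root_.trans (wtLT_iff_prodLex.1 h₁) (wtLT_iff_prodLex.1 h₂))

lemma wtLT_irrefl (u : NormalWord B N) : ¬ wtLT r u u :=
  fun h => irrefl _ (wtLT_iff_prodLex.1 h)

lemma wellFounded_wtLT : WellFounded (wtLT r (N := N)) :=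
  Subrelation.wf prodLex_shortlex_of_wtLT
    (InvImage.wf _ ((List.Shortlex.wf IsWellFounded.wf).prod_lex IsWellFounded.wf))

lemma wtLE.trans_wtLT {u v w : NormalWord B N} (h₁ : wtLE r u v)
    (h₂ : wtLT r v w) : wtLT r u w := by
  rcases h₁ with h₁ | rfl
  exacts [wtLT_trans h₁ h₂, h₂]

lemma wtLT.trans_wtLE {u v w : NormalWord B N} (h₁ : wtLT r u v)
    (h₂ : wtLE r v w) : wtLT r u w := by
  rcases h₂ with h₂ | rfl
  exacts [wtLT_trans h₁ h₂, h₁]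

lemma isLead_unique {bas : Module.Basis (NormalWord B N) K C} {x : C}
    {w w' : NormalWord B N} (h : IsLead bas r x w) (h' : IsLead bas r x w') : w = w' := by
  rcases h'.2 w h.1 with e | h₁
  · exact e
  rcases h.2 w' h'.1 with e | h₂
  · exact e.symm
  exact absurd (wtLT_trans h₁ h₂) (wtLT_irrefl w)

end WeightOrder

section ConformalIdentities

variable (A : ConformalAlgebra K C)

lemma ConformalAlgebra.mul_D_left (n : ℕ) (a x : C) :
    A.mul n (A.D a) x = -((n : K) • A.mul (n - 1) a x) := by
  rcases Nat.eq_zero_or_pos n with rfl | hn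
  · simp [A.D_mul_zero]
  · exact A.D_mul n a x hn

lemma ConformalAlgebra.mul_pow_D_left (n e : ℕ) (a x : C) :
    A.mul n ((A.D ^ e) a) x = ((-1) ^ e * (n.descFactorial e : K)) • A.mul (n - e) a x := by
  induction e generalizing n with
  | zero => simp
  | succ e ih =>
    rw [pow_succ', Module.End.mul_apply, A.mul_D_left]
    cases n with
    | zero => simp
    | succ n =>
      rw [Nat.add_sub_cancel, ih, Nat.succ_descFactorial_succ, Nat.add_sub_add_right, smul_smul,
        ← neg_smul]
      push_cast
      ring_nf

lemma ConformalAlgebra.mul_D_right (n : ℕ) (a x : C) :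
    A.mul n a (A.D x) = A.D (A.mul n a x) + (n : K) • A.mul (n - 1) a x := by
  rw [A.leibniz, A.mul_D_left]
  abel

end ConformalIdentities

lemma AssocConformalAlgebra.mul_mul_mem_span (A : AssocConformalAlgebra K C) (n m : ℕ)
    (a b c : C) :
    A.mul n a (A.mul m b c) ∈
      Submodule.span K (Set.range fun ij : ℕ × ℕ => A.mul ij.2 (A.mul ij.1 a b) c) := by
  induction n using Nat.strong_induction_on generalizing m with
  | _ n ih =>
    have h := A.assoc n m a b c
    rw [Finset.sum_range_succ'] at h
    simp only [pow_zero, Nat.choose_zero_right, Nat.cast_one, mul_one, one_smul, Nat.sub_zero,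
      Nat.add_zero] at h
    rw [eq_sub_of_add_eq' h.symm]
    refine Submodule.sub_mem _ (Submodule.subset_span ⟨(n, m), rfl⟩)
      (Submodule.sum_mem _ fun t ht => Submodule.smul_mem _ _ (ih _ ?_ _))
    rw [Finset.mem_range] at ht
    omega

section Reduction

open NormalWord Submodule

section MonicLead

variable {bas : Module.Basis (NormalWord B N) K C} {r : B → B → Prop}

lemma apply_mem_of_mem_span_basis_image (T : C →ₗ[K] C) {s : Set (NormalWord B N)}
    {M : Submodule K C} (h : ∀ v ∈ s, T (bas v) ∈ M) {x : C} (hx : x ∈ span K (bas '' s)) :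
    T x ∈ M :=
  (span_le (p := M.comap T)).2 (by rintro _ ⟨v, hv, rfl⟩; exact h v hv) hx

variable (bas r) in
def HasMonicLead (x : C) (w : NormalWord B N) : Prop :=
  x - bas w ∈ span K (bas '' {v | wtLT r v w})

lemma IsLead.hasMonicLead {s : C} {w : NormalWord B N} (hl : IsLead bas r s w)
    (h1 : bas.repr s w = 1) : HasMonicLead bas r s w := by
  classical
  rw [HasMonicLead, Module.Basis.mem_span_image]
  intro v hv
  rw [Finset.mem_coe, Finsupp.mem_support_iff, map_sub, bas.repr_self, Finsupp.sub_apply,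
    Finsupp.single_apply] at hv
  by_cases hvw : v = w
  · subst hvw
    simp [h1] at hv
  · rw [if_neg (Ne.symm hvw), sub_zero] at hv
    exact (hl.2 v hv).resolve_left hvw

lemma HasMonicLead.add_mem {x y : C} {w : NormalWord B N} (hx : HasMonicLead bas r x w)
    (hy : y ∈ span K (bas '' {v | wtLT r v w})) : HasMonicLead bas r (y + x) w := by
  rw [HasMonicLead, add_sub_assoc]
  exact Submodule.add_mem _ hy hx

lemma HasMonicLead.mem_span_wtLE {x : C} {w : NormalWord B N} (hx : HasMonicLead bas r x w) :
    x ∈ span K (bas '' {v | wtLE r v w}) := by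
  have := Submodule.add_mem _ (span_mono (Set.image_mono fun v hv => Or.inl hv) hx)
    (subset_span ⟨w, Or.inr rfl, rfl⟩ : bas w ∈ span K (bas '' {v | wtLE r v w}))
  rwa [sub_add_cancel] at this

end MonicLead

section FreeAlgebra

variable {F : FreeAssocConformal K B N C} {bas : Module.Basis (NormalWord B N) K C}
  {r : B → B → Prop}

lemma bas_nil (hbas : ∀ w, bas w = evalWord F w) (b : B) (e : ℕ) :
    bas ⟨[], b, e⟩ = (F.alg.D ^ e) (F.ι b) := by
  rw [hbas]; rfl

lemma mul_ι_bas (hbas : ∀ w, bas w = evalWord F w) (b : B) {n : ℕ} (hn : n < N)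
    (u : NormalWord B N) : F.alg.mul n (F.ι b) (bas u) = bas (u.prepend [(b, ⟨n, hn⟩)]) := by
  rw [hbas, hbas]; rfl

lemma bas_cons (hbas : ∀ w, bas w = evalWord F w) (a : B × Fin N) (l : List (B × Fin N))
    (b : B) (e : ℕ) : bas ⟨a :: l, b, e⟩ = F.alg.mul a.2 (F.ι a.1) (bas ⟨l, b, e⟩) :=
  (mul_ι_bas hbas a.1 a.2.isLt ⟨l, b, e⟩).symm

lemma mul_ι_mem_span (hbas : ∀ w, bas w = evalWord F w) (b : B) {n : ℕ} (hn : n < N)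
    {s : Set (NormalWord B N)} {x : C} (hx : x ∈ span K (bas '' s)) :
    F.alg.mul n (F.ι b) x ∈ span K (bas '' (prepend [(b, ⟨n, hn⟩)] '' s)) := by
  refine apply_mem_of_mem_span_basis_image _ (fun v hv => ?_) hx
  rw [mul_ι_bas hbas b hn]
  exact subset_span ⟨_, ⟨v, hv, rfl⟩, rfl⟩

lemma HasMonicLead.mul_ι (hbas : ∀ w, bas w = evalWord F w) {x : C} {w : NormalWord B N}
    (hx : HasMonicLead bas r x w) (b : B) {n : ℕ} (hn : n < N) :
    HasMonicLead bas r (F.alg.mul n (F.ι b) x) (w.prepend [(b, ⟨n, hn⟩)]) := by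
  rw [HasMonicLead, ← mul_ι_bas hbas b hn, ← map_sub]
  refine span_mono ?_ (mul_ι_mem_span hbas b hn hx)
  rintro _ ⟨_, ⟨v, hv, rfl⟩, rfl⟩
  exact ⟨_, wtLT_prepend _ hv, rfl⟩

lemma HasMonicLead.evalAux (hbas : ∀ w, bas w = evalWord F w) {x : C} {w : NormalWord B N}
    (hx : HasMonicLead bas r x w) (p : List (B × Fin N)) :
    HasMonicLead bas r (evalAux F p x) (w.prepend p) := by
  induction p with
  | nil => exact hx
  | cons a p ih => exact ih.mul_ι hbas a.1 a.2.isLt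

lemma hasMonicLead_D_bas (hbas : ∀ w, bas w = evalWord F w) (u : NormalWord B N) :
    HasMonicLead bas r (F.alg.D (bas u)) (u.shiftD 1) := by
  obtain ⟨l, b, e⟩ := u
  induction l with
  | nil =>
    show F.alg.D (bas ⟨[], b, e⟩) - bas ⟨[], b, e + 1⟩ ∈ _
    rw [bas_nil hbas, bas_nil hbas, pow_succ', Module.End.mul_apply, sub_self]
    exact zero_mem _
  | cons a l ih =>
    rw [bas_cons hbas, F.alg.leibniz, F.alg.mul_D_left]
    refine (ih.mul_ι hbas a.1 a.2.isLt).add_mem ?_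
    rcases Nat.eq_zero_or_pos (a.2 : ℕ) with ha | ha
    · rw [show ((a.2 : ℕ) : K) = 0 by simp [ha], zero_smul, neg_zero]
      exact zero_mem _
    rw [mul_ι_bas hbas a.1 (n := a.2 - 1) (by omega)]
    refine neg_mem (smul_mem _ _ (subset_span ⟨_, ?_, rfl⟩))
    refine wtLT_prepend_singleton (u := ⟨l, b, e⟩) (v := ⟨l, b, e + 1⟩)
      (Prod.Lex.right _ ?_) le_rfl
    show (a.2 : ℕ) - 1 < a.2
    omega

lemma HasMonicLead.D [IsWellOrder B r] (hbas : ∀ w, bas w = evalWord F w) {x : C}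
    {w : NormalWord B N} (hx : HasMonicLead bas r x w) :
    HasMonicLead bas r (F.alg.D x) (w.shiftD 1) := by
  rw [HasMonicLead, ← sub_add_sub_cancel _ (F.alg.D (bas w)), ← map_sub]
  refine Submodule.add_mem _ (apply_mem_of_mem_span_basis_image _ (fun v hv => ?_) hx)
    (hasMonicLead_D_bas hbas w)
  refine span_mono (Set.image_mono fun u hu => ?_)
    (hasMonicLead_D_bas (r := r) hbas v).mem_span_wtLE
  exact wtLE.trans_wtLT hu (wtLT_shiftD 1 hv)

lemma HasMonicLead.pow_D [IsWellOrder B r] (hbas : ∀ w, bas w = evalWord F w) {x : C}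
    {w : NormalWord B N} (hx : HasMonicLead bas r x w) (i : ℕ) :
    HasMonicLead bas r ((F.alg.D ^ i) x) (w.shiftD i) := by
  induction i with
  | zero => exact hx
  | succ i ih =>
    rw [pow_succ', Module.End.mul_apply]
    exact ih.D hbas

lemma D_mem_span_length_le (hbas : ∀ w, bas w = evalWord F w) {k : ℕ} {x : C}
    (hx : x ∈ span K (bas '' {w | w.body.length ≤ k})) :
    F.alg.D x ∈ span K (bas '' {w | w.body.length ≤ k}) := by
  refine apply_mem_of_mem_span_basis_image _ (fun v hv => ?_) hx
  -- any relation will do: only the length bound carried by `wtLE` is used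
  refine span_mono (Set.image_mono fun u hu => ?_)
    (hasMonicLead_D_bas (r := emptyRelation) hbas v).mem_span_wtLE
  exact hu.length_le.trans hv

lemma mul_ι_bas_nil_mem_span_length_le (hbas : ∀ w, bas w = evalWord F w) (b c : B)
    (j q : ℕ) : F.alg.mul q (F.ι b) (bas ⟨[], c, j⟩) ∈ span K (bas '' {w | w.body.length ≤ 1}) := by
  induction j generalizing q with
  | zero =>
    rcases lt_or_ge q N with hq | hq
    · rw [mul_ι_bas hbas b hq]
      exact subset_span ⟨_, by simp [prepend], rfl⟩
    · rw [bas_nil hbas, pow_zero, Module.End.one_apply, F.loc b c q hq]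
      exact zero_mem _
  | succ j ih =>
    rw [bas_nil hbas, pow_succ', Module.End.mul_apply, ← bas_nil hbas, F.alg.mul_D_right]
    exact Submodule.add_mem _ (D_mem_span_length_le hbas (ih q)) (smul_mem _ _ (ih (q - 1)))

lemma mul_bas_mem_span_length_le_of_mul_ι (hbas : ∀ w, bas w = evalWord F w)
    {c : NormalWord B N} (hc : ∀ b q, F.alg.mul q (F.ι b) (bas c) ∈
      span K (bas '' {w | w.body.length ≤ c.body.length + 1}))
    (v : NormalWord B N) (q : ℕ) :
    F.alg.mul q (bas v) (bas c) ∈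
      span K (bas '' {w | w.body.length ≤ v.body.length + c.body.length + 1}) := by
  obtain ⟨l, b, e⟩ := v
  induction l generalizing q with
  | nil =>
    rw [bas_nil hbas, F.alg.mul_pow_D_left]
    exact smul_mem _ _ (by simpa using hc b (q - e))
  | cons a l ih =>
    rw [bas_cons hbas, F.alg.assoc]
    refine sum_mem fun t _ => smul_mem _ _ ?_
    refine span_mono ?_ (mul_ι_mem_span hbas a.1 (n := a.2 - t) (by omega) (ih (q + t)))
    rintro _ ⟨_, ⟨w, hw, rfl⟩, rfl⟩
    exact ⟨_, by simp only [Set.mem_ofPred_eq, prepend, List.length_append, List.length_cons,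
      List.length_nil] at hw ⊢; omega, rfl⟩

lemma mul_bas_bas_mem_span_length_le (hbas : ∀ w, bas w = evalWord F w) (c v : NormalWord B N)
    (q : ℕ) : F.alg.mul q (bas v) (bas c) ∈
      span K (bas '' {w | w.body.length ≤ v.body.length + c.body.length + 1}) := by
  obtain ⟨l, c₀, e⟩ := c
  induction l generalizing v q with
  | nil =>
    exact mul_bas_mem_span_length_le_of_mul_ι hbas (c := ⟨[], c₀, e⟩)
      (fun b q => mul_ι_bas_nil_mem_span_length_le hbas b c₀ e q) v q
  | cons a l ih =>
    refine mul_bas_mem_span_length_le_of_mul_ι hbas (c := ⟨a :: l, c₀, e⟩)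
      (fun b q => ?_) v q
    rw [bas_cons hbas]
    refine span_le.2 ?_ (F.alg.mul_mul_mem_span q a.2 (F.ι b) (F.ι a.1) (bas ⟨l, c₀, e⟩))
    rintro _ ⟨⟨i, j⟩, rfl⟩
    dsimp only
    rcases lt_or_ge i N with hi | hi
    · rw [show F.ι a.1 = bas ⟨[], a.1, 0⟩ from (bas_nil hbas a.1 0).symm, mul_ι_bas hbas b hi]
      refine span_mono (Set.image_mono fun w hw => ?_) (ih _ j)
      simp only [Set.mem_ofPred_eq, prepend, List.length_append, List.length_cons,
        List.length_nil] at hw ⊢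
      omega
    · rw [F.loc b a.1 i hi, map_zero, LinearMap.zero_apply]
      exact zero_mem _

lemma mul_bas_bas_sub_mem_span (hbas : ∀ w, bas w = evalWord F w) (c : NormalWord B N)
    (m : Fin N) (v : NormalWord B N) :
    F.alg.mul m (bas v) (bas c) - (if v.exp = 0 then bas (v.concat m c) else 0) ∈
      span K (bas '' {w | wtLT r w (v.concat m c)}) := by
  obtain ⟨l, b, e⟩ := v
  induction l with
  | nil =>
    rw [bas_nil hbas, F.alg.mul_pow_D_left, mul_ι_bas hbas b (n := m - e) (by omega)]
    rcases Nat.eq_zero_or_pos e with rfl | he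
    · simp [concat, prepend]
    rw [if_neg he.ne', sub_zero]
    rcases le_or_gt e m with hem | hme
    · refine smul_mem _ _ (subset_span ⟨_, ?_, rfl⟩)
      refine wtLT_prepend_singleton (u := c) (v := c) (Prod.Lex.right _ ?_) le_rfl
      show (m : ℕ) - e < m
      omega
    · rw [Nat.descFactorial_eq_zero_iff_lt.2 hme, Nat.cast_zero, mul_zero, zero_smul]
      exact zero_mem _
  | cons a l ih =>
    rw [bas_cons hbas, F.alg.assoc, Finset.sum_range_succ']
    simp only [pow_zero, Nat.choose_zero_right, Nat.cast_one, mul_one, one_smul, Nat.sub_zero,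
      Nat.add_zero]
    rw [add_sub_assoc]
    refine Submodule.add_mem _ (sum_mem fun t ht => smul_mem _ _ ?_) ?_
    · rw [Finset.mem_range] at ht
      refine span_mono ?_ (mul_ι_mem_span hbas a.1 (n := a.2 - (t + 1)) (by omega)
        (mul_bas_bas_mem_span_length_le hbas c ⟨l, b, e⟩ (m + (t + 1))))
      rintro _ ⟨_, ⟨w, hw, rfl⟩, rfl⟩
      refine ⟨_, wtLT_prepend_singleton (v := (⟨l, b, e⟩ : NormalWord B N).concat m c)
        (Prod.Lex.right _ ?_) ?_, rfl⟩
      · show (a.2 : ℕ) - (t + 1) < a.2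
        omega
      · simp only [Set.mem_ofPred_eq, concat, List.length_append, List.length_cons] at hw ⊢
        omega
    · have hlead : F.alg.mul a.2 (F.ι a.1)
          (if e = 0 then bas ((⟨l, b, e⟩ : NormalWord B N).concat m c) else 0) =
          if e = 0 then bas ((⟨a :: l, b, e⟩ : NormalWord B N).concat m c) else 0 := by
        split_ifs
        · exact mul_ι_bas hbas a.1 a.2.isLt _
        · exact map_zero _
      rw [← hlead, ← map_sub]
      refine span_mono ?_ (mul_ι_mem_span hbas a.1 a.2.isLt ih)
      rintro _ ⟨_, ⟨w, hw, rfl⟩, rfl⟩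
      exact ⟨_, wtLT_prepend [a] hw, rfl⟩

lemma mul_bas_bas_mem_span_wtLE (hbas : ∀ w, bas w = evalWord F w) (c : NormalWord B N)
    (m : Fin N) (v : NormalWord B N) :
    F.alg.mul m (bas v) (bas c) ∈ span K (bas '' {w | wtLE r w (v.concat m c)}) := by
  have h := span_mono (Set.image_mono fun w (hw : wtLT r w _) => (Or.inl hw : wtLE r w _))
    (mul_bas_bas_sub_mem_span (r := r) hbas c m v)
  split_ifs at h
  · have h' := Submodule.add_mem _ h (subset_span ⟨_, Or.inr rfl, rfl⟩)
    rwa [sub_add_cancel] at h'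
  · rwa [sub_zero] at h

lemma HasMonicLead.mul_bas [IsWellOrder B r] (hbas : ∀ w, bas w = evalWord F w) {x : C}
    {w : NormalWord B N} (hx : HasMonicLead bas r x w) (hw : w.exp = 0) (m : Fin N)
    (c : NormalWord B N) : HasMonicLead bas r (F.alg.mul m x (bas c)) (w.concat m c) := by
  have h := mul_bas_bas_sub_mem_span (r := r) hbas c m w
  rw [if_pos hw] at h
  rw [HasMonicLead, ← sub_add_sub_cancel _ (F.alg.mul m (bas w) (bas c))]
  refine Submodule.add_mem _ ?_ h
  rw [← LinearMap.sub_apply, ← map_sub]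
  refine apply_mem_of_mem_span_basis_image ((F.alg.mul m).flip (bas c)) (fun v hv => ?_) hx
  exact span_mono (Set.image_mono fun u hu => wtLE.trans_wtLT hu (wtLT_concat hw m c hv))
    (mul_bas_bas_mem_span_wtLE hbas c m v)

lemma IsNSWord.hasMonicLead [IsWellOrder B r] (hbas : ∀ w, bas w = evalWord F w) {S : Set C}
    (hS : MonicSet bas r S) {g : C} {w : NormalWord B N} (h : IsNSWord F bas r S g w) :
    HasMonicLead bas r g w := by
  have monic : ∀ s ∈ S, ∀ sw, IsLead bas r s sw → HasMonicLead bas r s sw := by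
    intro s hs sw hl
    obtain ⟨sw', hl', h1⟩ := hS s hs
    rw [← isLead_unique hl' hl]
    exact hl'.hasMonicLead h1
  cases h with
  | first p s hs sw hl hfree m c =>
    have hw : (sw.concat m c).prepend p =
        ⟨p ++ sw.body ++ (sw.last, m) :: c.body, c.last, c.exp⟩ := by
      simp [prepend, concat]
    rw [← hbas c, ← hw]
    exact ((monic s hs sw hl).mul_bas hbas hfree m c).evalAux hbas p
  | second p s hs sw hl i => exact ((monic s hs sw hl).pow_D hbas i).evalAux hbas p

end FreeAlgebra

section Decomposition

variable (F : FreeAssocConformal K B N C) (bas : Module.Basis (NormalWord B N) K C)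
  (r : B → B → Prop) (S : Set C)

def spanNSWordsIrr (Q : Set (NormalWord B N)) : Submodule K C :=
  span K ({g | ∃ w ∈ Q, IsNSWord F bas r S g w} ∪ evalWord F '' (Irr F bas r S ∩ Q))

variable {F bas r S}

lemma span_bas_le_spanNSWordsIrr [IsWellOrder B r] (hbas : ∀ w, bas w = evalWord F w)
    (hS : MonicSet bas r S) {Q : Set (NormalWord B N)}
    (hQ : ∀ u ∈ Q, ∀ v, wtLT r v u → v ∈ Q) :
    span K (bas '' Q) ≤ spanNSWordsIrr F bas r S Q := by
  refine span_le.2 ?_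
  rintro _ ⟨u, hu, rfl⟩
  induction u using (wellFounded_wtLT (r := r) (N := N)).induction with
  | _ u ih =>
    by_cases hirr : u ∈ Irr F bas r S
    · exact subset_span (Or.inr ⟨u, ⟨hirr, hu⟩, (hbas u).symm⟩)
    obtain ⟨g, hg⟩ : ∃ g, IsNSWord F bas r S g u := by simpa [Irr] using hirr
    have hlower : span K (bas '' {v | wtLT r v u}) ≤ spanNSWordsIrr F bas r S Q := by
      refine span_le.2 ?_
      rintro _ ⟨v, hv, rfl⟩
      exact ih v hv (hQ u hu v hv)
    rw [← sub_sub_cancel g (bas u)]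
    exact sub_mem (subset_span (Or.inl ⟨u, hu, hg⟩)) (hlower (hg.hasMonicLead hbas hS))

lemma exists_sum_of_mem_spanNSWordsIrr {Q : Set (NormalWord B N)} {x : C}
    (hx : x ∈ spanNSWordsIrr F bas r S Q) :
    ∃ (n₁ n₂ : ℕ) (α : Fin n₁ → K) (g : Fin n₁ → C) (wd : Fin n₁ → NormalWord B N)
      (β : Fin n₂ → K) (u : Fin n₂ → NormalWord B N),
      x = (∑ i, α i • g i) + ∑ j, β j • evalWord F (u j) ∧
      (∀ i, IsNSWord F bas r S (g i) (wd i) ∧ wd i ∈ Q) ∧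
      (∀ j, u j ∈ Irr F bas r S ∧ u j ∈ Q) := by
  rw [spanNSWordsIrr, span_union, mem_sup] at hx
  obtain ⟨y, hy, z, hz, rfl⟩ := hx
  obtain ⟨n₁, α, g, rfl⟩ := mem_span_set'.1 hy
  obtain ⟨n₂, β, e, rfl⟩ := mem_span_set'.1 hz
  choose wd hwd using fun i => (g i).2
  choose u hu using fun j => (e j).2
  refine ⟨n₁, n₂, α, fun i => g i, wd, β, u, ?_, fun i => ⟨(hwd i).2, (hwd i).1⟩,
    fun j => (hu j).1⟩
  simp only [(hu _).2]

end Decomposition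

end Reduction

theorem decomposition_normal_SWords_and_irreducibles_general {K : Type u} [Field K]
    {B : Type v} {N : ℕ} {C : Type w} [AddCommGroup C] [Module K C]
    (F : FreeAssocConformal K B N C) (bas : Module.Basis (NormalWord B N) K C)
    (hbas : ∀ w, bas w = evalWord F w)
    (r : B → B → Prop) (hr : IsWellOrder B r)
    (S : Set C) (hS : MonicSet bas r S) (f : C) :
    ∃ (n₁ n₂ : ℕ) (α : Fin n₁ → K) (g : Fin n₁ → C) (wd : Fin n₁ → NormalWord B N)
      (β : Fin n₂ → K) (u : Fin n₂ → NormalWord B N),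
      f = (∑ i, α i • g i) + ∑ j, β j • evalWord F (u j) ∧
      (∀ i, IsNSWord F bas r S (g i) (wd i) ∧
        ∀ fw, IsLead bas r f fw → wtLE r (wd i) fw) ∧
      (∀ j, u j ∈ Irr F bas r S ∧
        ∀ fw, IsLead bas r f fw → wtLE r (u j) fw) := by
  have := hr
  let Q : Set (NormalWord B N) := {u | ∀ fw, IsLead bas r f fw → wtLE r u fw}
  have hQ : ∀ u ∈ Q, ∀ v, wtLT r v u → v ∈ Q :=
    fun u hu v hv fw hfw => Or.inl (hv.trans_wtLE (hu fw hfw))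
  have hf : f ∈ Submodule.span K (bas '' Q) := by
    rw [Module.Basis.mem_span_image]
    intro u hu fw hfw
    rcases hfw.2 u (Finsupp.mem_support_iff.1 hu) with rfl | h
    exacts [Or.inr rfl, Or.inl h]
  exact exists_sum_of_mem_spanNSWordsIrr (span_bas_le_spanNSWordsIrr hbas hS hQ hf)

theorem decomposition_normal_SWords_and_irreducibles {K : Type u} [Field K] [CharZero K]
    {B : Type v} {N : ℕ} {C : Type w} [AddCommGroup C] [Module K C]
    (F : FreeAssocConformal K B N C) (bas : Module.Basis (NormalWord B N) K C)
    (hbas : ∀ w, bas w = evalWord F w)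
    (r : B → B → Prop) (hr : IsWellOrder B r)
    (S : Set C) (hS : MonicSet bas r S) (f : C) :
    ∃ (n₁ n₂ : ℕ) (α : Fin n₁ → K) (g : Fin n₁ → C) (wd : Fin n₁ → NormalWord B N)
      (β : Fin n₂ → K) (u : Fin n₂ → NormalWord B N),
      f = (∑ i, α i • g i) + ∑ j, β j • evalWord F (u j) ∧
      (∀ i, IsNSWord F bas r S (g i) (wd i) ∧
        ∀ fw, IsLead bas r f fw → wtLE r (wd i) fw) ∧
      (∀ j, u j ∈ Irr F bas r S ∧
        ∀ fw, IsLead bas r f fw → wtLE r (u j) fw) :=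
  decomposition_normal_SWords_and_irreducibles_general F bas hbas r hr S hS f
end

section
/- In the free associative conformal algebra C({L_i}_{i∈ℤ}, N = 2) over ℂ, the set S₁ = { L_{i(0)} L_j − L_{0(0)} L_{i+j} (i ≠ 0), L_{i(1)} L_j + L_{i+j} : i, j ∈ ℤ } generates the same ideal as the set S^{(−)} = { L_{i(0)} L_j + L_{j(1)} D L_i − 2 L_{j(0)} L_i + D L_{i+j}, L_{i(1)} L_j + L_{j(1)} L_i + 2 L_{i+j} : i, j ∈ ℤ } of defining relations of the universal enveloping algebra of the loop Virasoro Lie conformal algebra. -/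
/-!  Basic definitions for (associative) conformal algebras, the free
associative conformal algebra `C(B,N)`, normal words, the weight ordering,
normal `S`-words, compositions and Gröbner–Shirshov bases, following
Ni–Chen, "A new Composition-Diamond lemma for associative conformal algebras". -/

universe u v w

open scoped BigOperators

variable {K : Type u} [Field K] {C : Type w} [AddCommGroup C] [Module K C]

variable {B : Type v} {N : ℕ}

section LoopVirasoro

variable {C : Type w} [AddCommGroup C] [Module ℂ C]

/-- The relations `S₁` for the loop Virasoro enveloping algebra. -/
def loopVirS1 (F : FreeAssocConformal ℂ ℤ 2 C) : Set C :=
  {x | (∃ i j : ℤ, i ≠ 0 ∧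
          x = F.alg.mul 0 (F.ι i) (F.ι j) - F.alg.mul 0 (F.ι 0) (F.ι (i + j))) ∨
       (∃ i j : ℤ, x = F.alg.mul 1 (F.ι i) (F.ι j) + F.ι (i + j))}

/-- The defining relations `S^{(−)}` of the universal enveloping algebra of the
loop Virasoro Lie conformal algebra. -/
def loopVirSminus (F : FreeAssocConformal ℂ ℤ 2 C) : Set C :=
  {x | (∃ i j : ℤ,
          x = F.alg.mul 0 (F.ι i) (F.ι j) + F.alg.mul 1 (F.ι j) (F.alg.D (F.ι i))
              - (2 : ℂ) • F.alg.mul 0 (F.ι j) (F.ι i) + F.alg.D (F.ι (i + j))) ∨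
       (∃ i j : ℤ,
          x = F.alg.mul 1 (F.ι i) (F.ι j) + F.alg.mul 1 (F.ι j) (F.ι i)
              + (2 : ℂ) • F.ι (i + j))}

/-! Both ideals contain the commutators `L_i(0)L_j − L_j(0)L_i` and the elements
`B_ij = L_i(1)L_j + L_{i+j}`, because `Q_ij = B_ij + B_ji` and
`P_ij = (L_i(0)L_j − L_j(0)L_i) + D B_ji`; this gives `S^{(−)} ⊆ (S₁)`.
Conversely, in `(S^{(−)})` the product `P_ij (2) L_k = −2 (L_j(1)(L_i(1)L_k) + L_{i+j}(1)L_k)`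
together with the `Q`'s yields every `B_ij`. Then `B_ij (0) L_k`, corrected by commutators and
`B`'s, gives `L_{i+j}(0)L_k ≡ L_{i+k}(0)L_j`, and `(i, j, k) = (−b, a + b, b)` is the first
family of `S₁`. -/

namespace ConformalAlgebra

variable {R M : Type*} [Field R] [AddCommGroup M] [Module R M] (A : ConformalAlgebra R M)

theorem mul_succ_D_left (n : ℕ) (a b : M) :
    A.mul (n + 1) (A.D a) b = -(((n : R) + 1) • A.mul n a b) := by
  simpa using A.D_mul (n + 1) a b n.succ_pos

theorem mul_one_D_right (a b : M) : A.mul 1 a (A.D b) = A.D (A.mul 1 a b) + A.mul 0 a b := by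
  rw [A.leibniz, show (1 : ℕ) = 0 + 1 from rfl, A.mul_succ_D_left]
  simp

end ConformalAlgebra

namespace AssocConformalAlgebra

variable {R M : Type*} [Field R] [AddCommGroup M] [Module R M] (A : AssocConformalAlgebra R M)

theorem mul_zero_mul (m : ℕ) (a b c : M) :
    A.mul m (A.mul 0 a b) c = A.mul 0 a (A.mul m b c) := by
  simpa using A.assoc 0 m a b c

theorem mul_one_mul (m : ℕ) (a b c : M) :
    A.mul m (A.mul 1 a b) c = A.mul 1 a (A.mul m b c) - A.mul 0 a (A.mul (m + 1) b c) := by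
  simp [A.assoc 1 m a b c, Finset.sum_range_succ, sub_eq_add_neg]

end AssocConformalAlgebra

namespace InIdeal

variable {R B M : Type*} {N : ℕ} [Field R] [AddCommGroup M] [Module R M]
  {F : FreeAssocConformal R B N M} {S T : Set M} {x y : M}

theorem sub (hx : InIdeal F S x) (hy : InIdeal F S y) : InIdeal F S (x - y) :=
  (idealOf F S).sub_mem hx hy

theorem trans (hST : ∀ s ∈ S, InIdeal F T s) (hx : InIdeal F S x) : InIdeal F T x := by
  induction hx with
  | mem hs => exact hST _ hs
  | zero => exact zero
  | add _ _ ihx ihy => exact ihx.add ihy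
  | smul a _ ih => exact ih.smul a
  | deriv _ ih => exact ih.deriv
  | mul_left n y _ ih => exact ih.mul_left n y
  | mul_right n y _ ih => exact ih.mul_right n y

end InIdeal

variable (F : FreeAssocConformal ℂ ℤ 2 C)

local notation "L" => F.ι
local notation:80 a:81 " ⬝[" n "] " b:80 => F.alg.mul n a b

/- `loopVirA`, `loopVirB` are the two families of `S₁` (the first one with `i = 0` allowed,
where it vanishes); `loopVirP`, `loopVirQ` are the two families of `S^{(−)}`. -/

noncomputable def loopVirA (i j : ℤ) : C := L i ⬝[0] L j - L 0 ⬝[0] L (i + j)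

noncomputable def loopVirB (i j : ℤ) : C := L i ⬝[1] L j + L (i + j)

noncomputable def loopVirP (i j : ℤ) : C :=
  L i ⬝[0] L j + L j ⬝[1] F.alg.D (L i) - (2 : ℂ) • L j ⬝[0] L i + F.alg.D (L (i + j))

noncomputable def loopVirQ (i j : ℤ) : C :=
  L i ⬝[1] L j + L j ⬝[1] L i + (2 : ℂ) • L (i + j)

theorem loopVirQ_eq (i j : ℤ) : loopVirQ F i j = loopVirB F i j + loopVirB F j i := by
  rw [loopVirQ, loopVirB, loopVirB, add_comm j i]
  module

theorem loopVirP_eq (i j : ℤ) :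
    loopVirP F i j = (L i ⬝[0] L j - L j ⬝[0] L i) + F.alg.D (loopVirB F j i) := by
  rw [loopVirP, loopVirB, F.alg.mul_one_D_right, map_add, add_comm j i]
  module

theorem loopVirA_mem_ideal_S1 (i j : ℤ) : InIdeal F (loopVirS1 F) (loopVirA F i j) := by
  rcases eq_or_ne i 0 with rfl | hi
  · simpa [loopVirA] using InIdeal.zero
  · exact .mem (.inl ⟨i, j, hi, rfl⟩)

theorem loopVirB_mem_ideal_S1 (i j : ℤ) : InIdeal F (loopVirS1 F) (loopVirB F i j) :=
  .mem (.inr ⟨i, j, rfl⟩)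

theorem commutator_mem_ideal_S1 (i j : ℤ) :
    InIdeal F (loopVirS1 F) (L i ⬝[0] L j - L j ⬝[0] L i) := by
  convert (loopVirA_mem_ideal_S1 F i j).sub (loopVirA_mem_ideal_S1 F j i) using 1
  rw [loopVirA, loopVirA, add_comm j i]
  abel

theorem loopVirP_mem_ideal_S1 (i j : ℤ) : InIdeal F (loopVirS1 F) (loopVirP F i j) := by
  rw [loopVirP_eq]
  exact (commutator_mem_ideal_S1 F i j).add (loopVirB_mem_ideal_S1 F j i).deriv

theorem loopVirQ_mem_ideal_S1 (i j : ℤ) : InIdeal F (loopVirS1 F) (loopVirQ F i j) := by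
  rw [loopVirQ_eq]
  exact (loopVirB_mem_ideal_S1 F i j).add (loopVirB_mem_ideal_S1 F j i)

theorem loopVirP_mem_ideal_Sminus (i j : ℤ) : InIdeal F (loopVirSminus F) (loopVirP F i j) :=
  .mem (.inl ⟨i, j, rfl⟩)

theorem loopVirQ_mem_ideal_Sminus (i j : ℤ) : InIdeal F (loopVirSminus F) (loopVirQ F i j) :=
  .mem (.inr ⟨i, j, rfl⟩)

theorem loopVirP_mul_two (i j k : ℤ) :
    loopVirP F i j ⬝[2] L k = -(2 : ℂ) • (L j ⬝[1] (L i ⬝[1] L k) + L (i + j) ⬝[1] L k) := by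
  have hD (n : ℕ) (a : C) := F.alg.mul_succ_D_left n a
  simp only [loopVirP, map_add, map_sub, map_smul, LinearMap.add_apply, LinearMap.sub_apply,
    LinearMap.smul_apply, F.alg.mul_zero_mul, F.alg.mul_one_mul, F.loc _ _ 2 le_rfl, hD 1, hD 2]
  simp only [map_zero, map_neg, map_smul]
  module

theorem mul_one_mul_one_mem_ideal_Sminus (i j k : ℤ) :
    InIdeal F (loopVirSminus F) (L j ⬝[1] (L i ⬝[1] L k) + L (i + j) ⬝[1] L k) := by
  convert ((loopVirP_mem_ideal_Sminus F i j).mul_right 2 (L k)).smul (-2⁻¹ : ℂ) using 1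
  rw [loopVirP_mul_two, smul_smul]
  norm_num

theorem loopVirB_mem_ideal_Sminus (i j : ℤ) :
    InIdeal F (loopVirSminus F) (loopVirB F i j) := by
  have hreduce (j k : ℤ) :
      InIdeal F (loopVirSminus F) (L j ⬝[1] L k - L (j + k) ⬝[1] L 0) := by
    convert (((loopVirQ_mem_ideal_Sminus F 0 k).mul_left 1 (L j)).sub
      (mul_one_mul_one_mem_ideal_Sminus F 0 j k)).sub
      (mul_one_mul_one_mem_ideal_Sminus F k j 0) using 1
    simp only [loopVirQ, zero_add, add_comm k j, map_add, map_smul]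
    module
  have hB0 (s : ℤ) : InIdeal F (loopVirSminus F) (loopVirB F s 0) := by
    convert ((loopVirQ_mem_ideal_Sminus F s 0).sub (hreduce 0 s)).smul (2⁻¹ : ℂ) using 1
    simp only [loopVirB, loopVirQ, add_zero, zero_add]
    module
  convert (hreduce i j).add (hB0 (i + j)) using 1
  rw [loopVirB, loopVirB, add_zero]
  abel

theorem commutator_mem_ideal_Sminus (i j : ℤ) :
    InIdeal F (loopVirSminus F) (L i ⬝[0] L j - L j ⬝[0] L i) := by
  convert (loopVirP_mem_ideal_Sminus F i j).sub (loopVirB_mem_ideal_Sminus F j i).deriv using 1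
  rw [loopVirP_eq, add_sub_cancel_right]

theorem loopVirB_mul_zero (i j k : ℤ) :
    loopVirB F i j ⬝[0] L k =
      L i ⬝[1] (L j ⬝[0] L k) - L i ⬝[0] (L j ⬝[1] L k) + L (i + j) ⬝[0] L k := by
  rw [loopVirB, map_add, LinearMap.add_apply, F.alg.mul_one_mul]

theorem mul_zero_sub_mem_ideal_Sminus (i j k : ℤ) :
    InIdeal F (loopVirSminus F) (L (i + j) ⬝[0] L k - L (i + k) ⬝[0] L j) := by
  have hV (j k : ℤ) := (loopVirB_mem_ideal_Sminus F i j).mul_right 0 (L k)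
  have hC := (commutator_mem_ideal_Sminus F j k).mul_left 1 (L i)
  have hB (j k : ℤ) := (loopVirB_mem_ideal_Sminus F j k).mul_left 0 (L i)
  convert (((hV j k).sub (hV k j)).sub hC).sub ((hB k j).sub (hB j k)) using 1
  rw [loopVirB_mul_zero, loopVirB_mul_zero]
  simp only [loopVirB, add_comm k j, map_add, map_sub]
  module

theorem loopVirA_mem_ideal_Sminus (i j : ℤ) : InIdeal F (loopVirSminus F) (loopVirA F i j) := by
  simpa [loopVirA] using mul_zero_sub_mem_ideal_Sminus F (-j) (i + j) j

theorem loopVirasoro_ideals_eq (F : FreeAssocConformal ℂ ℤ 2 C) :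
    ∀ x : C, InIdeal F (loopVirS1 F) x ↔ InIdeal F (loopVirSminus F) x := by
  refine fun x => ⟨InIdeal.trans ?_, InIdeal.trans ?_⟩
  · rintro s (⟨i, j, -, rfl⟩ | ⟨i, j, rfl⟩)
    exacts [loopVirA_mem_ideal_Sminus F i j, loopVirB_mem_ideal_Sminus F i j]
  · rintro s (⟨i, j, rfl⟩ | ⟨i, j, rfl⟩)
    exacts [loopVirP_mem_ideal_S1 F i j, loopVirQ_mem_ideal_S1 F i j]

end LoopVirasoro
end

section
/- Let S be a monic subset of C(B, N) that is closed under the compositions of left multiplication and right multiplication (i.e., all such compositions are trivial modulo S). Then every S-word (any word containing exactly one occurrence of some D^i s with s ∈ S) can be written as a linear combination of normal S-words. -/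
/-!  Basic definitions for (associative) conformal algebras, the free
associative conformal algebra `C(B,N)`, normal words, the weight ordering,
normal `S`-words, compositions and Gröbner–Shirshov bases, following
Ni–Chen, "A new Composition-Diamond lemma for associative conformal algebras". -/

universe u v w

open scoped BigOperators

variable {K : Type u} [Field K] {C : Type w} [AddCommGroup C] [Module K C]

variable {B : Type v} {N : ℕ}

/-! The span `G` of the normal `S`-words contains every `D^i s` and is stable under `D` and under
left and right multiplication by every word on `D^ω(B)`; since an `S`-word is built from some
`D^i s` by such multiplications, it lies in `G`. For multiplication it suffices to handle a single
generator `b`, since the elements `a` with `a_(n) G ⊆ G` (resp. `G_(n) a ⊆ G`) for all `n` are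
closed under products and powers of `D`. On the right, associativity carries `_(j) b` inward
to `s`, where `s_(j) b` is a normal `S`-word, trivial modulo `S`, or, for `D`-free `s` and
`j ≥ N`, zero by locality. On the left, inverse associativity and `b_(n) a = 0` for `n ≥ N`
reduce `b_(n)` to indices below `N`, except directly in front of `s`, where closure under left
multiplication compositions applies. -/

theorem sum_choose_mul_neg_one_pow_mul_choose {R : Type*} [CommRing R] (n k : ℕ) :
    ∑ t ∈ Finset.range (k + 1),
      (n.choose t : R) * ((-1) ^ (k - t) * ((n - t).choose (k - t) : R)) =
      n.choose k * 0 ^ k := by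
  have hterm : ∀ t ∈ Finset.range (k + 1),
      (n.choose t : R) * ((-1) ^ (k - t) * ((n - t).choose (k - t) : R)) =
        n.choose k * (1 ^ t * (-1) ^ (k - t) * (k.choose t : R)) := by
    intro t ht
    have hchoose := congrArg (Nat.cast : ℕ → R)
      (Nat.choose_mul (n := n) (Nat.lt_succ_iff.mp (Finset.mem_range.mp ht)))
    push_cast at hchoose
    linear_combination (-1 : R) ^ (k - t) * hchoose.symm
  rw [Finset.sum_congr rfl hterm, ← Finset.mul_sum, ← add_pow, add_neg_cancel]

namespace ConformalAlgebra

variable (A : ConformalAlgebra K C) {M : Submodule K C}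

theorem mul_D_left_mem {a x : C} {n : ℕ} (h : ∀ m < n, A.mul m a x ∈ M) :
    A.mul n (A.D a) x ∈ M := by
  cases n with
  | zero => rw [A.D_mul_zero]; exact M.zero_mem
  | succ n =>
    rw [A.D_mul _ _ _ n.succ_pos, Nat.succ_sub_one]
    exact M.neg_mem (M.smul_mem _ (h n n.lt_succ_self))

theorem mul_Dpow_left_mem {a x : C} (h : ∀ m, A.mul m a x ∈ M) (i n : ℕ) :
    A.mul n ((A.D ^ i) a) x ∈ M := by
  induction i generalizing n with
  | zero => exact h n
  | succ i ih =>
    rw [pow_succ', Module.End.mul_apply]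
    exact A.mul_D_left_mem fun m _ => ih m

theorem mul_D_right_s18 (n : ℕ) (x y : C) :
    A.mul n x (A.D y) = A.D (A.mul n x y) - A.mul n (A.D x) y := by
  rw [A.leibniz]; abel

end ConformalAlgebra

namespace AssocConformalAlgebra

variable (A : AssocConformalAlgebra K C)

/-- Binomial inversion of `assoc`. -/
theorem mul_mul_eq_sum (n m : ℕ) (a b c : C) :
    A.mul n a (A.mul m b c) =
      ∑ t ∈ Finset.range (n + 1), (n.choose t : K) • A.mul (m + t) (A.mul (n - t) a b) c := by
  symm
  calc ∑ t ∈ Finset.range (n + 1), (n.choose t : K) • A.mul (m + t) (A.mul (n - t) a b) c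
      = ∑ t ∈ Finset.range (n + 1), ∑ k ∈ Finset.Ico t (n + 1),
          ((n.choose t : K) * ((-1) ^ (k - t) * ((n - t).choose (k - t) : K))) •
            A.mul (n - k) a (A.mul (m + k) b c) := by
        refine Finset.sum_congr rfl fun t ht => ?_
        have htn : n + 1 - t = n - t + 1 := by
          have := Finset.mem_range.mp ht; omega
        rw [A.assoc, Finset.sum_Ico_eq_sum_range, htn, Finset.smul_sum]
        refine Finset.sum_congr rfl fun j _ => ?_
        rw [smul_smul, Nat.add_sub_cancel_left, Nat.sub_sub, add_assoc]
    _ = ∑ k ∈ Finset.range (n + 1), ∑ t ∈ Finset.range (k + 1),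
          ((n.choose t : K) * ((-1) ^ (k - t) * ((n - t).choose (k - t) : K))) •
            A.mul (n - k) a (A.mul (m + k) b c) := by
        refine Finset.sum_comm' fun t k => ?_
        simp only [Finset.mem_range, Finset.mem_Ico]
        omega
    _ = ∑ k ∈ Finset.range (n + 1),
          ((n.choose k : K) * 0 ^ k) • A.mul (n - k) a (A.mul (m + k) b c) := by
        refine Finset.sum_congr rfl fun k _ => ?_
        rw [← Finset.sum_smul, sum_choose_mul_neg_one_pow_mul_choose]
    _ = A.mul n a (A.mul m b c) := by
        rw [Finset.sum_eq_single 0 (fun k _ hk => by rw [zero_pow hk, mul_zero, zero_smul])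
          (fun h => absurd (Finset.mem_range.mpr n.succ_pos) h)]
        simp

theorem mul_mul_mem_of_locality {M : Submodule K C} {N : ℕ} {a b y : C}
    (hloc : ∀ n, N ≤ n → A.mul n b a = 0)
    (h : ∀ n < N, ∀ k, A.mul n b (A.mul k a y) ∈ M) (n k : ℕ) :
    A.mul n b (A.mul k a y) ∈ M := by
  rw [mul_mul_eq_sum]
  refine M.sum_mem fun t _ => M.smul_mem _ ?_
  by_cases hnt : n - t < N
  · rw [A.assoc]
    exact M.sum_mem fun u _ => M.smul_mem _ (h _ ((Nat.sub_le _ _).trans_lt hnt) _)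
  · rw [hloc _ (not_lt.mp hnt), map_zero, LinearMap.zero_apply]
    exact M.zero_mem

def leftStabilizer (M : Submodule K C) : Set C := {a | ∀ n, ∀ x ∈ M, A.mul n a x ∈ M}

def rightStabilizer (M : Submodule K C) : Set C := {c | ∀ n, ∀ x ∈ M, A.mul n x c ∈ M}

variable {A} {M : Submodule K C}

theorem Dpow_mem_leftStabilizer {a : C} (ha : a ∈ A.leftStabilizer M) (i : ℕ) :
    (A.D ^ i) a ∈ A.leftStabilizer M :=
  fun n x hx => A.mul_Dpow_left_mem (fun m => ha m x hx) i n

theorem mul_mem_leftStabilizer {a a' : C} (ha : a ∈ A.leftStabilizer M)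
    (ha' : a' ∈ A.leftStabilizer M) (k : ℕ) : A.mul k a a' ∈ A.leftStabilizer M := by
  intro n x hx
  rw [A.assoc]
  exact M.sum_mem fun t _ => M.smul_mem _ (ha _ _ (ha' _ _ hx))

theorem Dpow_mem_rightStabilizer (hM : ∀ x ∈ M, A.D x ∈ M) {c : C}
    (hc : c ∈ A.rightStabilizer M) (i : ℕ) : (A.D ^ i) c ∈ A.rightStabilizer M := by
  induction i with
  | zero => exact hc
  | succ i ih =>
    intro n x hx
    rw [pow_succ', Module.End.mul_apply, A.mul_D_right_s18]
    exact M.sub_mem (hM _ (ih n x hx)) (ih n _ (hM x hx))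

theorem mul_mem_rightStabilizer {c c' : C} (hc : c ∈ A.rightStabilizer M)
    (hc' : c' ∈ A.rightStabilizer M) (k : ℕ) : A.mul k c c' ∈ A.rightStabilizer M := by
  intro n x hx
  rw [mul_mul_eq_sum]
  exact M.sum_mem fun t _ => M.smul_mem _ (hc' _ _ (hc _ _ hx))

end AssocConformalAlgebra

theorem evalCWord_mem {F : FreeAssocConformal K B N C} {T : Set C}
    (hgen : ∀ b i, (F.alg.D ^ i) (F.ι b) ∈ T)
    (hmul : ∀ k, ∀ x ∈ T, ∀ y ∈ T, F.alg.mul k x y ∈ T) (v : CWord B) :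
    evalCWord F v ∈ T := by
  induction v with
  | gen b i => exact hgen b i
  | mul k u v hu hv => exact hmul k _ hu _ hv

theorem evalWord_mem {F : FreeAssocConformal K B N C} {T : Set C}
    (hgen : ∀ b i, (F.alg.D ^ i) (F.ι b) ∈ T)
    (hmul : ∀ k, ∀ x ∈ T, ∀ y ∈ T, F.alg.mul k x y ∈ T) (c : NormalWord B N) :
    evalWord F c ∈ T := by
  obtain ⟨body, last, e⟩ := c
  induction body with
  | nil => exact hgen last e
  | cons p body ih => exact hmul _ _ (by simpa using hgen p.1 0) _ ih

theorem evalAux_mul_gen_eq_zero (F : FreeAssocConformal K B N C) (body : List (B × Fin N))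
    (a b : B) {j : ℕ} (hj : N ≤ j) : F.alg.mul j (evalAux F body (F.ι a)) (F.ι b) = 0 := by
  induction body generalizing j with
  | nil => exact F.loc a b j hj
  | cons p body ih =>
    refine (F.alg.assoc _ _ _ _ _).trans (Finset.sum_eq_zero fun t _ => ?_)
    rw [ih (hj.trans (Nat.le_add_right _ _)), map_zero, smul_zero]

theorem mul_gen_eq_zero_of_not_notDFree {F : FreeAssocConformal K B N C}
    {bas : Module.Basis (NormalWord B N) K C} (hbas : ∀ w, bas w = evalWord F w) {s : C}
    (hs : ¬ NotDFree bas s) (b : B) {j : ℕ} (hj : N ≤ j) : F.alg.mul j s (F.ι b) = 0 := by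
  have hspan : s ∈ LinearMap.ker ((F.alg.mul j).flip (F.ι b)) := by
    refine Submodule.span_le.mpr ?_ (bas.mem_span_repr_support s)
    rintro _ ⟨w, hw, rfl⟩
    have hexp : w.exp = 0 := not_not.mp fun he => hs ⟨w, Finsupp.mem_support_iff.mp hw, he⟩
    simpa [hbas, evalWord, hexp] using evalAux_mul_gen_eq_zero F w.body w.last b hj
  exact hspan

section NormalSWords

variable (F : FreeAssocConformal K B N C) (bas : Module.Basis (NormalWord B N) K C)
  (r : B → B → Prop) (S : Set C)

def normalSWordSpan : Submodule K C := Submodule.span K {y | ∃ w, IsNSWord F bas r S y w}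

variable {F bas r S}

theorem IsNSWord.mem_normalSWordSpan {y : C} {w : NormalWord B N}
    (h : IsNSWord F bas r S y w) : y ∈ normalSWordSpan F bas r S :=
  Submodule.subset_span ⟨w, h⟩

theorem map_mem_of_mem_normalSWordSpan {L : C →ₗ[K] C} {M : Submodule K C}
    (h : ∀ y w, IsNSWord F bas r S y w → L y ∈ M) {x : C}
    (hx : x ∈ normalSWordSpan F bas r S) : L x ∈ M :=
  (Submodule.span_le (p := M.comap L)).mpr (by rintro y ⟨w, hw⟩; exact h y w hw) hx

theorem gen_mul_mem_normalSWordSpan_of_lt {x : C} (hx : x ∈ normalSWordSpan F bas r S)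
    (b : B) {n : ℕ} (hn : n < N) : F.alg.mul n (F.ι b) x ∈ normalSWordSpan F bas r S := by
  refine map_mem_of_mem_normalSWordSpan (fun y w hyw => ?_) hx
  cases hyw with
  | first p s hs sw hlead hfree m c =>
    exact (IsNSWord.first ((b, ⟨n, hn⟩) :: p) s hs sw hlead hfree m c).mem_normalSWordSpan
  | second p s hs sw hlead i =>
    exact (IsNSWord.second ((b, ⟨n, hn⟩) :: p) s hs sw hlead i).mem_normalSWordSpan

theorem mul_mem_normalSWordSpan_of_lt (hbas : ∀ w, bas w = evalWord F w) {s : C} (hs : s ∈ S)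
    {sw : NormalWord B N} (hlead : IsLead bas r s sw) (hfree : sw.exp = 0) {m : ℕ} (hm : m < N)
    (y : C) : F.alg.mul m s y ∈ normalSWordSpan F bas r S := by
  have htop : (⊤ : Submodule K C) ≤ (normalSWordSpan F bas r S).comap (F.alg.mul m s) := by
    rw [← bas.span_eq]
    refine Submodule.span_le.mpr ?_
    rintro _ ⟨w, rfl⟩
    rw [SetLike.mem_coe, Submodule.mem_comap, hbas]
    exact (IsNSWord.first [] s hs sw hlead hfree ⟨m, hm⟩ w).mem_normalSWordSpan
  exact htop Submodule.mem_top

theorem TrivialMod.mem_normalSWordSpan {h : C} (ht : TrivialMod F bas r S h) :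
    h ∈ normalSWordSpan F bas r S := by
  obtain ⟨n, α, g, w, rfl, hg⟩ := ht
  exact Submodule.sum_mem _ fun i _ => Submodule.smul_mem _ _ (hg i).1.mem_normalSWordSpan

theorem D_evalAux_mem_normalSWordSpan {X : C}
    (hX : ∀ q, ∃ w, IsNSWord F bas r S (evalAux F q X) w)
    (hDX : F.alg.D X ∈ normalSWordSpan F bas r S) (p : List (B × Fin N)) :
    F.alg.D (evalAux F p X) ∈ normalSWordSpan F bas r S := by
  induction p with
  | nil => exact hDX
  | cons a p ih =>
    rw [evalAux, F.alg.leibniz]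
    refine Submodule.add_mem _ ?_ (gen_mul_mem_normalSWordSpan_of_lt ih a.1 a.2.2)
    refine F.alg.mul_D_left_mem fun m hm => ?_
    obtain ⟨w, hw⟩ := hX ((a.1, ⟨m, hm.trans a.2.2⟩) :: p)
    exact hw.mem_normalSWordSpan

theorem IsNSWord.D_mem_normalSWordSpan (hbas : ∀ w, bas w = evalWord F w) {y : C}
    {w : NormalWord B N} (h : IsNSWord F bas r S y w) :
    F.alg.D y ∈ normalSWordSpan F bas r S := by
  cases h with
  | first p s hs sw hlead hfree m c =>
    refine D_evalAux_mem_normalSWordSpan (fun q => ⟨_, .first q s hs sw hlead hfree m c⟩) ?_ p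
    rw [F.alg.leibniz]
    refine Submodule.add_mem _ ?_ (mul_mem_normalSWordSpan_of_lt hbas hs hlead hfree m.2 _)
    exact F.alg.mul_D_left_mem fun k hk =>
      (IsNSWord.first [] s hs sw hlead hfree ⟨k, hk.trans m.2⟩ c).mem_normalSWordSpan
  | second p s hs sw hlead i =>
    refine D_evalAux_mem_normalSWordSpan (fun q => ⟨_, .second q s hs sw hlead i⟩) ?_ p
    rw [← Module.End.mul_apply, ← pow_succ']
    exact (IsNSWord.second [] s hs sw hlead (i + 1)).mem_normalSWordSpan

theorem D_mem_normalSWordSpan (hbas : ∀ w, bas w = evalWord F w) {x : C}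
    (hx : x ∈ normalSWordSpan F bas r S) : F.alg.D x ∈ normalSWordSpan F bas r S :=
  map_mem_of_mem_normalSWordSpan (fun _ _ h => h.D_mem_normalSWordSpan hbas) hx

theorem mul_gen_mem_normalSWordSpan_of_mem (hbas : ∀ w, bas w = evalWord F w)
    (hS : MonicSet bas r S) (hR : RightMultClosed F bas r S) {s : C} (hs : s ∈ S)
    (j : ℕ) (b : B) :
    F.alg.mul j s (F.ι b) ∈ normalSWordSpan F bas r S := by
  obtain ⟨sw, hlead, -⟩ := hS s hs
  by_cases hj : j < N
  · by_cases hexp : sw.exp = 0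
    · simpa [evalAux, evalWord] using
        (IsNSWord.first [] s hs sw hlead hexp ⟨j, hj⟩ ⟨[], b, 0⟩).mem_normalSWordSpan
    · exact (hR s hs b j (.inl ⟨⟨sw, hlead, hexp⟩, hj⟩)).mem_normalSWordSpan
  · by_cases hD : NotDFree bas s
    · exact (hR s hs b j (.inr ⟨hD, not_lt.mp hj⟩)).mem_normalSWordSpan
    · rw [mul_gen_eq_zero_of_not_notDFree hbas hD b (not_lt.mp hj)]
      exact Submodule.zero_mem _

theorem evalAux_mul_gen_mem_normalSWordSpan {X : C}
    (hX : ∀ j b, F.alg.mul j X (F.ι b) ∈ normalSWordSpan F bas r S) (p : List (B × Fin N))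
    (j : ℕ) (b : B) : F.alg.mul j (evalAux F p X) (F.ι b) ∈ normalSWordSpan F bas r S := by
  induction p generalizing j with
  | nil => exact hX j b
  | cons a p ih =>
    rw [evalAux, F.alg.assoc]
    refine Submodule.sum_mem _ fun t _ => Submodule.smul_mem _ _ ?_
    exact gen_mul_mem_normalSWordSpan_of_lt (ih _) a.1 ((Nat.sub_le _ _).trans_lt a.2.2)

theorem IsNSWord.mul_gen_mem_normalSWordSpan (hbas : ∀ w, bas w = evalWord F w)
    (hS : MonicSet bas r S) (hR : RightMultClosed F bas r S) {y : C} {w : NormalWord B N}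
    (h : IsNSWord F bas r S y w) (j : ℕ) (b : B) :
    F.alg.mul j y (F.ι b) ∈ normalSWordSpan F bas r S := by
  cases h with
  | first p s hs sw hlead hfree m c =>
    refine evalAux_mul_gen_mem_normalSWordSpan (fun j b => ?_) p j b
    rw [F.alg.assoc]
    exact Submodule.sum_mem _ fun t _ => Submodule.smul_mem _ _
      (mul_mem_normalSWordSpan_of_lt hbas hs hlead hfree ((Nat.sub_le _ _).trans_lt m.2) _)
  | second p s hs sw hlead i =>
    exact evalAux_mul_gen_mem_normalSWordSpan (fun j b => F.alg.mul_Dpow_left_mem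
      (fun k => mul_gen_mem_normalSWordSpan_of_mem hbas hS hR hs k b) i j) p j b

theorem gen_mem_rightStabilizer (hbas : ∀ w, bas w = evalWord F w) (hS : MonicSet bas r S)
    (hR : RightMultClosed F bas r S) (b : B) :
    F.ι b ∈ F.alg.rightStabilizer (normalSWordSpan F bas r S) := fun j _ hx =>
  map_mem_of_mem_normalSWordSpan (L := (F.alg.mul j).flip (F.ι b))
    (fun _ _ h => h.mul_gen_mem_normalSWordSpan hbas hS hR j b) hx

theorem Dpow_gen_mem_rightStabilizer (hbas : ∀ w, bas w = evalWord F w) (hS : MonicSet bas r S)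
    (hR : RightMultClosed F bas r S) (b : B) (i : ℕ) :
    (F.alg.D ^ i) (F.ι b) ∈ F.alg.rightStabilizer (normalSWordSpan F bas r S) :=
  AssocConformalAlgebra.Dpow_mem_rightStabilizer (fun _ => D_mem_normalSWordSpan hbas)
    (gen_mem_rightStabilizer hbas hS hR b) i

theorem evalCWord_mem_rightStabilizer (hbas : ∀ w, bas w = evalWord F w) (hS : MonicSet bas r S)
    (hR : RightMultClosed F bas r S) (v : CWord B) :
    evalCWord F v ∈ F.alg.rightStabilizer (normalSWordSpan F bas r S) :=
  evalCWord_mem (Dpow_gen_mem_rightStabilizer hbas hS hR)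
    (fun k _ hx _ hy => AssocConformalAlgebra.mul_mem_rightStabilizer hx hy k) v

theorem evalWord_mem_rightStabilizer (hbas : ∀ w, bas w = evalWord F w) (hS : MonicSet bas r S)
    (hR : RightMultClosed F bas r S) (c : NormalWord B N) :
    evalWord F c ∈ F.alg.rightStabilizer (normalSWordSpan F bas r S) :=
  evalWord_mem (Dpow_gen_mem_rightStabilizer hbas hS hR)
    (fun k _ hx _ hy => AssocConformalAlgebra.mul_mem_rightStabilizer hx hy k) c

theorem gen_mul_mem_normalSWordSpan_of_mem (hS : MonicSet bas r S)
    (hL : LeftMultClosed F bas r S) {s : C} (hs : s ∈ S) (n : ℕ) (b : B) :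
    F.alg.mul n (F.ι b) s ∈ normalSWordSpan F bas r S := by
  by_cases hn : n < N
  · obtain ⟨sw, hlead, -⟩ := hS s hs
    simpa [evalAux] using
      (IsNSWord.second [(b, ⟨n, hn⟩)] s hs sw hlead 0).mem_normalSWordSpan
  · exact (hL s hs b n (not_lt.mp hn)).mem_normalSWordSpan

theorem gen_mul_Dpow_mem_normalSWordSpan (hbas : ∀ w, bas w = evalWord F w)
    (hS : MonicSet bas r S) (hL : LeftMultClosed F bas r S) {s : C} (hs : s ∈ S) (i n : ℕ)
    (b : B) : F.alg.mul n (F.ι b) ((F.alg.D ^ i) s) ∈ normalSWordSpan F bas r S := by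
  induction i generalizing n with
  | zero => simpa using gen_mul_mem_normalSWordSpan_of_mem hS hL hs n b
  | succ i ih =>
    rw [pow_succ', Module.End.mul_apply, F.alg.mul_D_right_s18]
    exact Submodule.sub_mem _ (D_mem_normalSWordSpan hbas (ih n))
      (F.alg.mul_D_left_mem fun m _ => ih m)

theorem gen_mul_evalAux_mem_normalSWordSpan {X : C}
    (hX : ∀ n b, F.alg.mul n (F.ι b) X ∈ normalSWordSpan F bas r S) (p : List (B × Fin N))
    (n : ℕ) (b : B) : F.alg.mul n (F.ι b) (evalAux F p X) ∈ normalSWordSpan F bas r S := by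
  induction p generalizing n b with
  | nil => exact hX n b
  | cons a p ih =>
    exact F.alg.mul_mul_mem_of_locality (F.loc b a.1)
      (fun n hn k => gen_mul_mem_normalSWordSpan_of_lt (ih k a.1) b hn) n a.2

theorem IsNSWord.gen_mul_mem_normalSWordSpan (hbas : ∀ w, bas w = evalWord F w)
    (hS : MonicSet bas r S) (hL : LeftMultClosed F bas r S) (hR : RightMultClosed F bas r S)
    {y : C} {w : NormalWord B N} (h : IsNSWord F bas r S y w) (n : ℕ) (b : B) :
    F.alg.mul n (F.ι b) y ∈ normalSWordSpan F bas r S := by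
  cases h with
  | first p s hs sw hlead hfree m c =>
    refine gen_mul_evalAux_mem_normalSWordSpan (fun n b => ?_) p n b
    rw [F.alg.mul_mul_eq_sum]
    exact Submodule.sum_mem _ fun t _ => Submodule.smul_mem _ _
      (evalWord_mem_rightStabilizer hbas hS hR c _ _
        (gen_mul_mem_normalSWordSpan_of_mem hS hL hs _ b))
  | second p s hs sw hlead i =>
    exact gen_mul_evalAux_mem_normalSWordSpan
      (fun n b => gen_mul_Dpow_mem_normalSWordSpan hbas hS hL hs i n b) p n b

theorem gen_mem_leftStabilizer (hbas : ∀ w, bas w = evalWord F w) (hS : MonicSet bas r S)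
    (hL : LeftMultClosed F bas r S) (hR : RightMultClosed F bas r S) (b : B) :
    F.ι b ∈ F.alg.leftStabilizer (normalSWordSpan F bas r S) := fun n _ hx =>
  map_mem_of_mem_normalSWordSpan (L := F.alg.mul n (F.ι b))
    (fun _ _ h => h.gen_mul_mem_normalSWordSpan hbas hS hL hR n b) hx

theorem evalCWord_mem_leftStabilizer (hbas : ∀ w, bas w = evalWord F w) (hS : MonicSet bas r S)
    (hL : LeftMultClosed F bas r S) (hR : RightMultClosed F bas r S) (v : CWord B) :
    evalCWord F v ∈ F.alg.leftStabilizer (normalSWordSpan F bas r S) :=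
  evalCWord_mem
    (fun b => AssocConformalAlgebra.Dpow_mem_leftStabilizer
      (gen_mem_leftStabilizer hbas hS hL hR b))
    (fun k _ hx _ hy => AssocConformalAlgebra.mul_mem_leftStabilizer hx hy k) v

theorem IsSWord.mem_normalSWordSpan (hbas : ∀ w, bas w = evalWord F w) (hS : MonicSet bas r S)
    (hL : LeftMultClosed F bas r S) (hR : RightMultClosed F bas r S) {x : C}
    (hx : IsSWord F S x) : x ∈ normalSWordSpan F bas r S := by
  induction hx with
  | base hs i =>
    obtain ⟨sw, hlead, -⟩ := hS _ hs
    exact (IsNSWord.second [] _ hs sw hlead i).mem_normalSWordSpan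
  | mul_right _ v m ih => exact evalCWord_mem_rightStabilizer hbas hS hR v m _ ih
  | mul_left _ v m ih => exact evalCWord_mem_leftStabilizer hbas hS hL hR v m _ ih

end NormalSWords

theorem SWord_eq_lin_comb_normal_SWords_general {K : Type u} [Field K]
    {B : Type v} {N : ℕ} {C : Type w} [AddCommGroup C] [Module K C]
    (F : FreeAssocConformal K B N C) (bas : Module.Basis (NormalWord B N) K C)
    (hbas : ∀ w, bas w = evalWord F w)
    (r : B → B → Prop)
    (S : Set C) (hS : MonicSet bas r S)
    (hL : LeftMultClosed F bas r S) (hR : RightMultClosed F bas r S)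
    (x : C) (hx : IsSWord F S x) :
    ∃ (n : ℕ) (α : Fin n → K) (g : Fin n → C) (wd : Fin n → NormalWord B N),
      x = ∑ i, α i • g i ∧ ∀ i, IsNSWord F bas r S (g i) (wd i) := by
  obtain ⟨n, α, g, hsum⟩ :=
    Submodule.mem_span_set'.mp (hx.mem_normalSWordSpan hbas hS hL hR)
  exact ⟨n, α, fun i => g i, fun i => (g i).2.choose, hsum.symm, fun i => (g i).2.choose_spec⟩

theorem SWord_eq_lin_comb_normal_SWords {K : Type u} [Field K] [CharZero K]
    {B : Type v} {N : ℕ} {C : Type w} [AddCommGroup C] [Module K C]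
    (F : FreeAssocConformal K B N C) (bas : Module.Basis (NormalWord B N) K C)
    (hbas : ∀ w, bas w = evalWord F w)
    (r : B → B → Prop) (hr : IsWellOrder B r)
    (S : Set C) (hS : MonicSet bas r S)
    (hL : LeftMultClosed F bas r S) (hR : RightMultClosed F bas r S)
    (x : C) (hx : IsSWord F S x) :
    ∃ (n : ℕ) (α : Fin n → K) (g : Fin n → C) (wd : Fin n → NormalWord B N),
      x = ∑ i, α i • g i ∧ ∀ i, IsNSWord F bas r S (g i) (wd i) :=
  SWord_eq_lin_comb_normal_SWords_general F bas hbas r S hS hL hR x hx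
end
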